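/- arXiv:2408.07145 — 4 statements merged into one kernel-verified Lean document; each statement's English description precedes it below -/
import Mathlib

section
/- The function f(w) = (1+|w|²)/(2w) on the punctured unit disc satisfies Δ f = -2 f, where Δ is the Laplace operator of the round metric on S⁴ restricted via the coordinate w; equivalently, in the explicit coordinate computation, the function (1+ρ²+x²+y²)/(2ρe^{iθ}) is an eigenfunction of the round-sphere Laplacian with eigenvalue -2. -/
noncomputable section

/-- Partial derivative of a complex-valued function on `ℝ⁴` (stereographic coordinates
on `S⁴`) in the `i`-th coordinate direction. -/
def pd4 (i : Fin 4) (f : (Fin 4 → ℝ) → ℂ) (y : Fin 4 → ℝ) : ℂ :=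
  fderiv ℝ f y (Pi.single i 1)

/-- Partial derivative of a real-valued function on `ℝ⁴`. -/
def pd4R (i : Fin 4) (f : (Fin 4 → ℝ) → ℝ) (y : Fin 4 → ℝ) : ℝ :=
  fderiv ℝ f y (Pi.single i 1)

/-- `|y|²` on `ℝ⁴`. -/
def nsq4 (y : Fin 4 → ℝ) : ℝ := ∑ i, y i ^ 2

/-- The conformal factor of the round metric `g_S = Ω² δ` on `S⁴` in stereographic
coordinates: `Ω(y) = 2/(1+|y|²)`. -/
def Ω4 (y : Fin 4 → ℝ) : ℝ := 2 / (1 + nsq4 y)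

/-- The function `f(w) = (1+|w|²)/(2w)` of the punctured-disc coordinate `w = y₁ + i y₂`
transverse to the fixed `S²`; in stereographic coordinates this is
`(1+ρ²+x²+y²)/(2ρe^{iθ})` with `ρe^{iθ} = y₁ + i y₂`. -/
def F0 (y : Fin 4 → ℝ) : ℂ := (1 + (nsq4 y : ℝ)) / (2 * ((y 0 : ℂ) + Complex.I * (y 1 : ℂ)))

/-- The (positive Hodge) Laplace operator of the round metric `g_S = Ω²δ` on `S⁴` in
stereographic coordinates, via the conformal formula
`Δ_S f = −Ω⁻²(Δ_E f + 2Ω⁻¹ ∇Ω·∇f)` in dimension 4 (with `Δ_E = Σᵢ∂ᵢ²`). -/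
def roundLap (f : (Fin 4 → ℝ) → ℂ) (y : Fin 4 → ℝ) : ℂ :=
  -(((Ω4 y : ℝ) : ℂ))⁻¹ ^ 2 *
    ((∑ i, pd4 i (pd4 i f) y) +
      2 * (((Ω4 y : ℝ) : ℂ))⁻¹ * ∑ i, ((pd4R i Ω4 y : ℝ) : ℂ) * pd4 i f y)

theorem myDiv {F : Type*} [NormedField F] [NormedAlgebra ℝ F] [CompleteSpace F]
    {f g : (Fin 4 → ℝ) → F} {f' g' : (Fin 4 → ℝ) →L[ℝ] F} {x : Fin 4 → ℝ}
    (hf : HasFDerivAt f f' x) (hg : HasFDerivAt g g' x) (hx : g x ≠ 0) :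
    HasFDerivAt (fun y => f y / g y)
      (((g x)⁻¹) • f' - (f x * ((g x)⁻¹) ^ 2) • g') x := by
  have hinv : HasFDerivAt (fun y => (g y)⁻¹)
      ((-(ContinuousLinearMap.mulLeftRight ℝ F (g x)⁻¹ (g x)⁻¹)).comp g') x :=
    (hasFDerivAt_inv' hx).comp x hg
  have hmul : HasFDerivAt (fun y => f y * (g y)⁻¹)
      (f x • ((-(ContinuousLinearMap.mulLeftRight ℝ F (g x)⁻¹ (g x)⁻¹)).comp g') + (g x)⁻¹ • f') x :=
    hf.mul hinv
  have hfun : (fun y => f y / g y) = fun y => f y * (g y)⁻¹ := by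
    funext z; rw [div_eq_mul_inv]
  rw [hfun]
  convert hmul using 1
  ext v
  simp [ContinuousLinearMap.mulLeftRight_apply, smul_eq_mul]
  ring

def Wc (y : Fin 4 → ℝ) : ℂ := (y 0 : ℂ) + Complex.I * y 1

def wv : Fin 4 → ℂ := ![1, Complex.I, 0, 0]

def prR (i : Fin 4) : (Fin 4 → ℝ) →L[ℝ] ℝ := ContinuousLinearMap.proj i

def prC (i : Fin 4) : (Fin 4 → ℝ) →L[ℝ] ℂ := Complex.ofRealCLM.comp (prR i)

def LW : (Fin 4 → ℝ) →L[ℝ] ℂ := prC 0 + Complex.I • prC 1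

def LS (y : Fin 4 → ℝ) : (Fin 4 → ℝ) →L[ℝ] ℝ := ∑ i, (2 * y i) • prR i

lemma prR_single (i j : Fin 4) : prR i (Pi.single j 1) = if i = j then 1 else 0 := by
  simp [prR, Pi.single_apply]

lemma LS_single (y : Fin 4 → ℝ) (i : Fin 4) : LS y (Pi.single i 1) = 2 * y i := by
  simp [LS, prR_single, Finset.sum_ite_eq]

lemma LW_single (i : Fin 4) : LW (Pi.single i 1) = wv i := by
  fin_cases i <;>
    simp [LW, prC, prR, wv, Pi.single_apply]

lemma hasWc (y : Fin 4 → ℝ) : HasFDerivAt Wc LW y := by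
  have h0 : HasFDerivAt (fun y : Fin 4 → ℝ => ((y 0 : ℝ) : ℂ)) (prC 0) y := (prC 0).hasFDerivAt
  have h1 : HasFDerivAt (fun y : Fin 4 → ℝ => ((y 1 : ℝ) : ℂ)) (prC 1) y := (prC 1).hasFDerivAt
  exact h0.add (h1.const_mul Complex.I)

lemma hasNsq (y : Fin 4 → ℝ) : HasFDerivAt nsq4 (LS y) y := by
  have h : ∀ i : Fin 4, HasFDerivAt (fun y : Fin 4 → ℝ => y i ^ 2) ((2 * y i) • prR i) y := by
    intro i
    have : HasFDerivAt (fun z : Fin 4 → ℝ => prR i z * prR i z) (prR i y • prR i + prR i y • prR i) y :=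
      ((prR i).hasFDerivAt (x := y)).mul ((prR i).hasFDerivAt (x := y))
    convert this using 1
    · funext z; simp [prR, sq]
    · ext v; simp [prR, smul_eq_mul]; ring
  exact HasFDerivAt.fun_sum (fun i _ => h i)

def nsq4c (y : Fin 4 → ℝ) : ℂ := ((nsq4 y : ℝ) : ℂ)

lemma hasNsqC (y : Fin 4 → ℝ) :
    HasFDerivAt nsq4c (Complex.ofRealCLM.comp (LS y)) y :=
  Complex.ofRealCLM.hasFDerivAt.comp y (hasNsq y)

def F0' (y : Fin 4 → ℝ) : ℂ := ((1 : ℂ) + nsq4c y) / (2 * Wc y)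

def DF0 (y : Fin 4 → ℝ) : (Fin 4 → ℝ) →L[ℝ] ℂ :=
  ((2 * Wc y)⁻¹) • (Complex.ofRealCLM.comp (LS y)) -
    (((1 : ℂ) + nsq4c y) * ((2 * Wc y)⁻¹) ^ 2) • ((2 : ℂ) • LW)

lemma hasF0 (y : Fin 4 → ℝ) (h : Wc y ≠ 0) : HasFDerivAt F0' (DF0 y) y := by
  have hnum : HasFDerivAt (fun y => (1 : ℂ) + nsq4c y)
      (Complex.ofRealCLM.comp (LS y)) y := (hasNsqC y).const_add 1
  have hden : HasFDerivAt (fun y => 2 * Wc y) ((2 : ℂ) • LW) y := (hasWc y).const_mul 2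
  have h2 : 2 * Wc y ≠ 0 := by simpa using h
  exact myDiv hnum hden h2

lemma pd4_F0 (i : Fin 4) (y : Fin 4 → ℝ) (h : Wc y ≠ 0) :
    pd4 i F0' y = (2 * Wc y)⁻¹ * (2 * y i) -
      ((1 : ℂ) + nsq4c y) * ((2 * Wc y)⁻¹) ^ 2 * (2 * wv i) := by
  unfold pd4
  rw [(hasF0 y h).fderiv]
  simp [DF0, LS_single, LW_single, smul_eq_mul]

def G (i : Fin 4) (y : Fin 4 → ℝ) : ℂ :=
  (2 * (y i : ℂ)) / (2 * Wc y) - (((1 : ℂ) + nsq4c y) * (2 * wv i)) / (2 * Wc y) ^ 2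

lemma pd4_F0_G (i : Fin 4) (y : Fin 4 → ℝ) (h : Wc y ≠ 0) : pd4 i F0' y = G i y := by
  rw [pd4_F0 i y h]
  have h2 : 2 * Wc y ≠ 0 := by simpa using h
  unfold G
  field_simp

lemma hasG (i : Fin 4) (y : Fin 4 → ℝ) (h : Wc y ≠ 0) :
    HasFDerivAt (G i)
      ((((2 * Wc y)⁻¹) • ((2 : ℂ) • prC i) -
          ((2 * (y i : ℂ)) * ((2 * Wc y)⁻¹) ^ 2) • ((2 : ℂ) • LW)) -
        ((((2 * Wc y) ^ 2)⁻¹) • ((2 * wv i) • (Complex.ofRealCLM.comp (LS y))) -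
          ((((1 : ℂ) + nsq4c y) * (2 * wv i)) * (((2 * Wc y) ^ 2)⁻¹) ^ 2) •
            ((2 * Wc y) • ((2 : ℂ) • LW) + (2 * Wc y) • ((2 : ℂ) • LW)))) y := by
  have h2 : 2 * Wc y ≠ 0 := by simpa using h
  have hden : HasFDerivAt (fun y => 2 * Wc y) ((2 : ℂ) • LW) y := (hasWc y).const_mul 2
  have hnum1 : HasFDerivAt (fun y : Fin 4 → ℝ => 2 * (y i : ℂ)) ((2 : ℂ) • prC i) y :=
    ((prC i).hasFDerivAt (x := y)).const_mul 2
  have h1 := myDiv hnum1 hden h2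
  have hnum2 : HasFDerivAt (fun y => ((1 : ℂ) + nsq4c y) * (2 * wv i))
      ((2 * wv i) • (Complex.ofRealCLM.comp (LS y))) y :=
    ((hasNsqC y).const_add 1).mul_const (2 * wv i)
  have hden2 : HasFDerivAt (fun y => (2 * Wc y) ^ 2)
      ((2 * Wc y) • ((2 : ℂ) • LW) + (2 * Wc y) • ((2 : ℂ) • LW)) y := by
    have : HasFDerivAt (fun z => 2 * Wc z * (2 * Wc z))
        ((2 * Wc y) • ((2 : ℂ) • LW) + (2 * Wc y) • ((2 : ℂ) • LW)) y := hden.mul hden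
    convert this using 1
    funext z; ring
  have h2' := myDiv hnum2 hden2 (pow_ne_zero 2 h2)
  exact h1.sub h2'

lemma pd4_G (i : Fin 4) (y : Fin 4 → ℝ) (h : Wc y ≠ 0) :
    pd4 i (G i) y =
      1 / Wc y - 2 * (y i : ℂ) * wv i / Wc y ^ 2 +
        ((1 : ℂ) + nsq4c y) * wv i ^ 2 / Wc y ^ 3 := by
  unfold pd4
  rw [(hasG i y h).fderiv]
  have h2 : 2 * Wc y ≠ 0 := by simpa using h
  simp [LS_single, LW_single, prC, prR_single, smul_eq_mul]
  field_simp
  ring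

lemma Wc_cont : Continuous Wc := by
  unfold Wc
  continuity

lemma pd2_F0 (i : Fin 4) (y : Fin 4 → ℝ) (h : Wc y ≠ 0) :
    pd4 i (pd4 i F0') y = pd4 i (G i) y := by
  have hU : {z | Wc z ≠ 0} ∈ nhds y := by
    have hop : IsOpen {z | Wc z ≠ 0} := isOpen_compl_singleton.preimage Wc_cont
    exact hop.mem_nhds h
  have hev : pd4 i F0' =ᶠ[nhds y] G i := by
    filter_upwards [hU] with z hz using pd4_F0_G i z hz
  show fderiv ℝ (pd4 i F0') y (Pi.single i 1) = _
  rw [hev.fderiv_eq]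
  rfl

lemma nsq4_nonneg (y : Fin 4 → ℝ) : 0 ≤ nsq4 y :=
  Finset.sum_nonneg fun i _ => sq_nonneg _

lemma pd4R_Ω (i : Fin 4) (y : Fin 4 → ℝ) :
    pd4R i Ω4 y = -(4 * y i) * ((1 + nsq4 y)⁻¹) ^ 2 := by
  have h0 := nsq4_nonneg y
  have h1s : (1 : ℝ) + nsq4 y ≠ 0 := by positivity
  have hΩ : HasFDerivAt Ω4
      (((1 + nsq4 y)⁻¹) • (0 : (Fin 4 → ℝ) →L[ℝ] ℝ) -
        (2 * ((1 + nsq4 y)⁻¹) ^ 2) • (LS y)) y :=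
    myDiv (hasFDerivAt_const 2 y) ((hasNsq y).const_add 1) h1s
  unfold pd4R
  rw [hΩ.fderiv]
  simp [LS_single]
  ring


lemma F0_eq : F0 = F0' := by
  funext y
  simp only [F0, F0', nsq4c, Wc]

lemma F0'_eq (y : Fin 4 → ℝ) : F0' y = (1 + (nsq4 y : ℂ)) / (2 * Wc y) := rfl

lemma sum2 (y : Fin 4 → ℝ) (hW : Wc y ≠ 0) :
    pd4 0 (G 0) y + pd4 1 (G 1) y + pd4 2 (G 2) y + pd4 3 (G 3) y =
      4 / Wc y - 2 * ((y 0 : ℂ) + Complex.I * (y 1 : ℂ)) / Wc y ^ 2 := by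
  rw [pd4_G 0 y hW, pd4_G 1 y hW, pd4_G 2 y hW, pd4_G 3 y hW]
  simp only [wv, Matrix.cons_val_zero, Matrix.cons_val_one, Matrix.head_cons,
    Matrix.cons_val_two, Matrix.tail_cons, Matrix.cons_val_three, Complex.I_sq]
  ring

lemma sum1 (y : Fin 4 → ℝ) (hW : Wc y ≠ 0) (h1sC : (1 : ℂ) + (nsq4 y : ℂ) ≠ 0) :
    ((pd4R 0 Ω4 y : ℝ) : ℂ) * G 0 y + ((pd4R 1 Ω4 y : ℝ) : ℂ) * G 1 y +
        ((pd4R 2 Ω4 y : ℝ) : ℂ) * G 2 y + ((pd4R 3 Ω4 y : ℝ) : ℂ) * G 3 y =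
      -4 * ((y 0 : ℂ) ^ 2 + (y 1 : ℂ) ^ 2 + (y 2 : ℂ) ^ 2 + (y 3 : ℂ) ^ 2) *
          ((((1 : ℂ) + (nsq4 y : ℂ))⁻¹) ^ 2) / Wc y +
        2 * ((y 0 : ℂ) + Complex.I * (y 1 : ℂ)) * ((1 : ℂ) + (nsq4 y : ℂ)) *
          ((((1 : ℂ) + (nsq4 y : ℂ))⁻¹) ^ 2) / Wc y ^ 2 := by
  rw [pd4R_Ω 0 y, pd4R_Ω 1 y, pd4R_Ω 2 y, pd4R_Ω 3 y]
  simp only [G, nsq4c, wv, Matrix.cons_val_zero, Matrix.cons_val_one, Matrix.head_cons,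
    Matrix.cons_val_two, Matrix.tail_cons, Matrix.cons_val_three]
  push_cast
  ring

lemma finalAlg (s w : ℂ) (hw : w ≠ 0) (hu : 1 + s ≠ 0) :
    -(2/(1+s))⁻¹^2 * ((4/w - 2*w/w^2) + 2*(2/(1+s))⁻¹ *
      (-4*s*((1+s)⁻¹)^2/w + 2*w*(1+s)*((1+s)⁻¹)^2/w^2)) = -2*((1+s)/(2*w)) := by
  have h1 : ((1+s)⁻¹)^2 = ((1+s)^2)⁻¹ := by rw [inv_pow]
  rw [inv_div, h1]
  field_simp
  ring_nf

/-- The function `f(w) = (1+|w|²)/(2w)` on the punctured unit disc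
satisfies `Δ_S f = −2f` for the Laplacian of the round metric on `S⁴`: in the explicit
coordinate computation, `(1+ρ²+x²+y²)/(2ρe^{iθ})` is an eigenfunction of the round-sphere
Laplacian with eigenvalue `−2`, away from the fixed 2-sphere `{y₁ = y₂ = 0}`. -/
theorem stmt0 (y : Fin 4 → ℝ) (hy : y 0 ^ 2 + y 1 ^ 2 ≠ 0) :
    roundLap F0 y = -2 * F0 y := by
  have hW : Wc y ≠ 0 := by
    intro hc
    apply hy
    have h0 : y 0 = 0 ∧ y 1 = 0 := by
      simpa [Wc, Complex.ext_iff] using hc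
    rw [h0.1, h0.2]; ring
  have h0 := nsq4_nonneg y
  have h1s : (1 : ℝ) + nsq4 y ≠ 0 := by positivity
  have h1sC : (1 : ℂ) + (nsq4 y : ℂ) ≠ 0 := by
    intro hc; exact h1s (by exact_mod_cast hc)
  rw [F0_eq]
  unfold roundLap
  rw [Fin.sum_univ_four, Fin.sum_univ_four]
  rw [pd2_F0 0 y hW, pd2_F0 1 y hW, pd2_F0 2 y hW, pd2_F0 3 y hW]
  rw [pd4_F0_G 0 y hW, pd4_F0_G 1 y hW, pd4_F0_G 2 y hW, pd4_F0_G 3 y hW]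
  rw [sum2 y hW, sum1 y hW h1sC]
  have hΩC : ((Ω4 y : ℝ) : ℂ) = 2 / (1 + (nsq4 y : ℂ)) := by
    simp only [Ω4]; push_cast; ring
  have hrelW : ((y 0 : ℂ) + Complex.I * (y 1 : ℂ)) = Wc y := rfl
  have hsq : ((y 0 : ℂ) ^ 2 + (y 1 : ℂ) ^ 2 + (y 2 : ℂ) ^ 2 + (y 3 : ℂ) ^ 2)
      = (nsq4 y : ℂ) := by
    simp [nsq4, Fin.sum_univ_four]
  rw [hΩC, hrelW, hsq, F0'_eq]
  exact finalAlg (nsq4 y : ℂ) (Wc y) hW h1sC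
end
end

section
/- The map M^f_{n,p} → ℝ × M^u_{n,p}, sending a framed monopole (A,Φ) to (CS[A⁰,A], [A,Φ]), is a bijection: injectivity follows from additivity of CS, and surjectivity follows since gauge-transforming by exp(sΦ) with s = (CS[A⁰,A] − t)/(4πnp) achieves any prescribed Chern–Simons number t. -/
/-- The map `M^f_{n,p} → ℝ × M^u_{n,p}`, sending a framed monopole
`(A,Φ)` to `(CS[A⁰,A], [A,Φ])`, is a bijection.  We encode monopoles as elements of a
type `C`, unframed gauge equivalence as an equivalence relation, the Chern–Simons pairing
`CS` with its (gauge-invariant) cocycle property `CS[A,C] = CS[A,B] + CS[B,C]`, and the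
gauge flow `A ↦ exp(sΦ)·A` with `CS[A, exp(sΦ)·A] = −4πnps`.  Framed gauge equivalence of
`A, B` means `gaugeEquiv A B ∧ CS A B = 0`.  Unfolding the quotients, bijectivity of the
map is exactly: (injectivity) gauge-equivalent monopoles with the same Chern–Simons number
relative to the reference `A⁰` are framed gauge equivalent, and (surjectivity) every
unframed gauge class contains, for each `t : ℝ`, a representative with `CS[A⁰,·] = t`. -/
theorem stmt7 {C : Type*} (gaugeEquiv : C → C → Prop)
    (hEquiv : Equivalence gaugeEquiv)
    (CS : C → C → ℝ) (n p : ℝ) (hnp : n * p ≠ 0)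
    (hCocycle : ∀ A B C' : C, CS A C' = CS A B + CS B C')
    (flow : ℝ → C → C)
    (hflowEquiv : ∀ (s : ℝ) (A : C), gaugeEquiv A (flow s A))
    (hflowCS : ∀ (s : ℝ) (A : C), CS A (flow s A) = -(4 * Real.pi * n * p * s))
    (A0 : C) :
    (∀ A B : C, gaugeEquiv A B → CS A0 A = CS A0 B →
        gaugeEquiv A B ∧ CS A B = 0) ∧
      (∀ (A : C) (t : ℝ), ∃ B : C, gaugeEquiv B A ∧ CS A0 B = t) := by
  constructor
  · intro A B hg hcs
    refine ⟨hg, ?_⟩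
    have := hCocycle A0 A B
    linarith
  · intro A t
    set s : ℝ := (CS A0 A - t) / (4 * Real.pi * n * p) with hs
    refine ⟨flow s A, hEquiv.symm (hflowEquiv s A), ?_⟩
    have h4 : 4 * Real.pi * n * p ≠ 0 := by
      have := Real.pi_ne_zero
      rcases mul_ne_zero_iff.mp hnp with ⟨hn, hp⟩
      positivity
    have := hCocycle A0 A (flow s A)
    rw [hflowCS] at this
    rw [this, hs]
    field_simp
    rw [mul_div_cancel_left₀ _ hnp]
    ring
end

section
/- The equivariant index of the Dirac operator evaluates to ind_{U(1)}(γ, D^B_S) = (n/2π)∫_{S²} ((γ^{4p} − γ^{−4p})/(γ − γ^{−1})) ω = 2n · Σ_{j=0}^{4p−1} γ^{2j+1−4p}; in particular, the coefficients of γ^{+1} and γ^{−1} in this Laurent polynomial are both 2n, so the weight ±1 subspaces of the kernel have dimension 2n. -/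
/-- With `2p = m ∈ ℕ`, `m > 0` (so `4p = 2m`), the equivariant index of
the Dirac operator evaluates, using `∫_{S²} ω = 4π`, to
`ind_{U(1)}(γ, D^B_S) = (n/2π)·4π·((γ^{4p} − γ^{−4p})/(γ − γ^{−1}))
  = 2n·Σ_{j=0}^{4p−1} γ^{2j+1−4p}`,
and the exponent `2j+1−4p` equals `+1` for exactly one `j ∈ {0,…,4p−1}` and `−1` for
exactly one such `j`; hence the coefficients of `γ^{+1}` and `γ^{−1}` in this Laurent
polynomial are both `2n`, so the weight `±1` subspaces of the kernel have dimension `2n`. -/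
theorem stmt10 (n m : ℕ) (hm : 0 < m) :
    (∀ γ : ℂ, γ ≠ 0 → γ - γ⁻¹ ≠ 0 →
      ((n : ℂ) / (2 * (Real.pi : ℂ))) * (4 * (Real.pi : ℂ)) *
          ((γ ^ (2 * (m : ℤ)) - γ ^ (-(2 * (m : ℤ)))) / (γ - γ⁻¹)) =
        ∑ j ∈ Finset.range (2 * m), (2 * (n : ℂ)) * γ ^ (2 * (j : ℤ) + 1 - 2 * (m : ℤ))) ∧
      ((Finset.range (2 * m)).filter
          (fun j : ℕ => 2 * (j : ℤ) + 1 - 2 * (m : ℤ) = 1)).card = 1 ∧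
      ((Finset.range (2 * m)).filter
          (fun j : ℕ => 2 * (j : ℤ) + 1 - 2 * (m : ℤ) = -1)).card = 1 := by
  refine ⟨?_, ?_, ?_⟩
  · intro γ hγ hne
    have hπ : (Real.pi : ℂ) ≠ 0 := by
      exact_mod_cast Complex.ofReal_ne_zero.mpr Real.pi_ne_zero
    have hc : ((n : ℂ) / (2 * (Real.pi : ℂ))) * (4 * (Real.pi : ℂ)) = 2 * (n : ℂ) := by
      field_simp; ring
    rw [hc, ← Finset.mul_sum]
    congr 1
    -- key geometric identity
    have hgeom : (∑ j ∈ Finset.range (2 * m), γ ^ j * γ⁻¹ ^ (2 * m - 1 - j)) * (γ - γ⁻¹)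
        = γ ^ (2 * m) - γ⁻¹ ^ (2 * m) := geom_sum₂_mul γ γ⁻¹ (2 * m)
    have hterm : ∀ j ∈ Finset.range (2 * m),
        γ ^ j * γ⁻¹ ^ (2 * m - 1 - j) = γ ^ (2 * (j : ℤ) + 1 - 2 * (m : ℤ)) := by
      intro j hj
      rw [Finset.mem_range] at hj
      rw [inv_pow, ← zpow_natCast γ j, ← zpow_natCast γ (2 * m - 1 - j), ← zpow_neg,
        ← zpow_add₀ hγ]
      congr 1
      have : (((2 * m - 1 - j : ℕ)) : ℤ) = 2 * m - 1 - j := by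
        push_cast [Nat.cast_sub (by omega : j ≤ 2 * m - 1)]
        omega
      rw [this]; ring
    rw [Finset.sum_congr rfl hterm] at hgeom
    rw [div_eq_iff hne, hgeom]
    congr 1
    rw [← zpow_natCast γ⁻¹ (2 * m), inv_zpow, ← zpow_neg]; norm_cast
  · have : ((Finset.range (2 * m)).filter
        (fun j : ℕ => 2 * (j : ℤ) + 1 - 2 * (m : ℤ) = 1)) = {m} := by
      ext j; simp only [Finset.mem_filter, Finset.mem_range, Finset.mem_singleton]; omega
    rw [this, Finset.card_singleton]
  · have : ((Finset.range (2 * m)).filter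
        (fun j : ℕ => 2 * (j : ℤ) + 1 - 2 * (m : ℤ) = -1)) = {m - 1} := by
      ext j; simp only [Finset.mem_filter, Finset.mem_range, Finset.mem_singleton]; omega
    rw [this, Finset.card_singleton]
end

section
/- The integral computing the charge-1 metric component evaluates exactly: ∫_{H³} 12λ⁴ρ⁴ / ((x−x₀)² + (y−y₀)² + ρ² + λ²)⁴ · (dx dy dρ)/ρ³ = π, for any λ > 0 and (x₀, y₀) ∈ ℝ². -/
open MeasureTheory Real Set Filter Topology


private lemma hasDerivAt_aux (A : ℝ) (hA : 0 < A) (n : ℕ) (x : ℝ) :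
    HasDerivAt (fun t : ℝ => -((t ^ 2 + A) ^ (n + 1))⁻¹ / (2 * ((n : ℝ) + 1)))
      (x / (x ^ 2 + A) ^ (n + 2)) x := by
  have hpos : 0 < x ^ 2 + A := by positivity
  have h1 : HasDerivAt (fun t : ℝ => t ^ 2 + A) (2 * x) x := by
    simpa [mul_comm] using (hasDerivAt_pow 2 x).add_const A
  have h2 : HasDerivAt (fun t : ℝ => (t ^ 2 + A) ^ (n + 1))
      (((n : ℝ) + 1) * (x ^ 2 + A) ^ n * (2 * x)) x := by
    simpa using h1.fun_pow (n + 1)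
  have h3 := (h2.inv (by positivity)).neg.div_const (2 * ((n : ℝ) + 1))
  refine h3.congr_deriv ?_
  have hne : (x ^ 2 + A) ≠ 0 := ne_of_gt hpos
  have hn1 : ((n : ℝ) + 1) ≠ 0 := by positivity
  field_simp
  ring

private lemma integral_aux (A : ℝ) (hA : 0 < A) (n : ℕ) :
    IntegrableOn (fun x : ℝ => x / (x ^ 2 + A) ^ (n + 2)) (Ioi 0) volume ∧
    ∫ x in Ioi (0:ℝ), x / (x ^ 2 + A) ^ (n + 2)
      = 1 / (2 * ((n : ℝ) + 1) * A ^ (n + 1)) := by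
  have hderiv : ∀ x ∈ Ici (0:ℝ),
      HasDerivAt (fun t : ℝ => -((t ^ 2 + A) ^ (n + 1))⁻¹ / (2 * ((n : ℝ) + 1)))
        (x / (x ^ 2 + A) ^ (n + 2)) x := fun x _ => hasDerivAt_aux A hA n x
  have hpos : ∀ x ∈ Ioi (0:ℝ), 0 ≤ x / (x ^ 2 + A) ^ (n + 2) :=
    fun x hx => div_nonneg (le_of_lt hx) (by positivity)
  have htend : Tendsto (fun t : ℝ => -((t ^ 2 + A) ^ (n + 1))⁻¹ / (2 * ((n : ℝ) + 1)))
      atTop (𝓝 0) := by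
    have h1 : Tendsto (fun t : ℝ => (t ^ 2 + A) ^ (n + 1)) atTop atTop :=
      (tendsto_pow_atTop (Nat.succ_ne_zero n)).comp
        (tendsto_atTop_add_const_right _ A (tendsto_pow_atTop two_ne_zero))
    have := (h1.inv_tendsto_atTop).neg.div_const (2 * ((n : ℝ) + 1))
    simpa using this
  refine ⟨integrableOn_Ioi_deriv_of_nonneg' hderiv hpos htend, ?_⟩
  rw [integral_Ioi_of_hasDerivAt_of_nonneg' hderiv hpos htend]
  have h0 : ((0:ℝ) ^ 2 + A) = A := by ring
  rw [h0]
  have hA' : A ^ (n + 1) ≠ 0 := by positivity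
  have hn1 : ((n : ℝ) + 1) ≠ 0 := by positivity
  field_simp
  ring


private lemma integrable_inv_pow {c : ℝ} (hc : 0 < c) (n : ℕ) :
    Integrable (fun y : ℝ => ((y ^ 2 + c) ^ (n + 1))⁻¹) := by
  have key : ∀ y : ℝ, min 1 c * c ^ n * (1 + y ^ 2) ≤ (y ^ 2 + c) ^ (n + 1) := by
    intro y
    have hm1 : min 1 c ≤ 1 := min_le_left _ _
    have hm2 : min 1 c ≤ c := min_le_right _ _
    have hm0 : 0 < min 1 c := lt_min one_pos hc
    have h1 : min 1 c * (1 + y ^ 2) ≤ y ^ 2 + c := by nlinarith [sq_nonneg y]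
    have h2 : c ^ n ≤ (y ^ 2 + c) ^ n :=
      pow_le_pow_left₀ hc.le (by nlinarith [sq_nonneg y]) n
    calc min 1 c * c ^ n * (1 + y ^ 2) = (min 1 c * (1 + y ^ 2)) * c ^ n := by ring
      _ ≤ (y ^ 2 + c) * (y ^ 2 + c) ^ n := by
          apply mul_le_mul h1 h2 (by positivity) (by nlinarith [sq_nonneg y])
      _ = (y ^ 2 + c) ^ (n + 1) := by ring
  have hm0 : 0 < min 1 c := lt_min one_pos hc
  apply (integrable_inv_one_add_sq.const_mul ((min 1 c * c ^ n)⁻¹)).mono'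
  · apply Measurable.aestronglyMeasurable; measurability
  · filter_upwards with y
    have hy : (0:ℝ) < y ^ 2 + c := by positivity
    rw [Real.norm_eq_abs, abs_of_nonneg (by positivity), ← mul_inv]
    exact inv_anti₀ (by positivity) (key y)
private lemma twoD (lam : ℝ) (hlam : 0 < lam) :
    ∫ p : ℝ × ℝ, 2 * lam ^ 4 / (p.1 ^ 2 + p.2 ^ 2 + lam ^ 2) ^ 3 = π := by
  rw [← integral_comp_polarCoord_symm]
  have htarget : polarCoord.target = Ioi (0 : ℝ) ×ˢ Ioo (-π) π := rfl
  have hmt : MeasurableSet polarCoord.target := by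
    rw [htarget]; exact (measurableSet_Ioi.prod measurableSet_Ioo)
  have hcongr : ∀ p ∈ polarCoord.target,
      p.1 • (2 * lam ^ 4 / ((polarCoord.symm p).1 ^ 2 + (polarCoord.symm p).2 ^ 2 + lam ^ 2) ^ 3)
        = (fun r : ℝ => r * (2 * lam ^ 4 / (r ^ 2 + lam ^ 2) ^ 3)) p.1 * (fun _ : ℝ => (1:ℝ)) p.2 := by
    intro p _
    have hsymm : polarCoord.symm p = (p.1 * cos p.2, p.1 * sin p.2) := rfl
    have h1 : (p.1 * cos p.2) ^ 2 + (p.1 * sin p.2) ^ 2 = p.1 ^ 2 := by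
      have h := sin_sq_add_cos_sq p.2
      linear_combination p.1 ^ 2 * h
    rw [hsymm]
    simp only [smul_eq_mul]
    rw [h1]
    ring
  rw [setIntegral_congr_fun hmt hcongr, htarget, Measure.volume_eq_prod,
    setIntegral_prod_mul (fun r : ℝ => r * (2 * lam ^ 4 / (r ^ 2 + lam ^ 2) ^ 3)) (fun _ : ℝ => (1:ℝ))]
  have hr : ∫ r in Ioi (0:ℝ), r * (2 * lam ^ 4 / (r ^ 2 + lam ^ 2) ^ 3) = (1:ℝ)/2 := by
    have : ∀ r : ℝ, r * (2 * lam ^ 4 / (r ^ 2 + lam ^ 2) ^ 3)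
        = (2 * lam ^ 4) * (r / (r ^ 2 + lam ^ 2) ^ (1 + 2)) := by
      intro r; ring
    simp_rw [this]
    rw [MeasureTheory.integral_const_mul, (integral_aux (lam ^ 2) (by positivity) 1).2]
    have : lam ^ 2 ≠ 0 := by positivity
    field_simp
    ring
  have hθ : ∫ _ in Ioo (-π) π, (1:ℝ) = 2 * π := by
    simp [Real.volume_Ioo]
    rw [max_eq_left (by positivity)]
    ring
  rw [hr, hθ]
  ring

/-- The integral computing the charge-1 metric component evaluates
exactly: over the upper half-space `{(x,y,ρ) : ρ > 0}` with hyperbolic volume form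
`ρ⁻³ dx dy dρ`, for any `λ > 0` and `(x₀,y₀) ∈ ℝ²`,
`∫ 12λ⁴ρ⁴/((x−x₀)² + (y−y₀)² + ρ² + λ²)⁴ · ρ⁻³ dx dy dρ = π`. -/
theorem stmt17 (lam x0 y0 : ℝ) (hlam : 0 < lam) :
    ∫ q in {q : ℝ × ℝ × ℝ | 0 < q.2.2},
        12 * lam ^ 4 * q.2.2 ^ 4 /
            ((q.1 - x0) ^ 2 + (q.2.1 - y0) ^ 2 + q.2.2 ^ 2 + lam ^ 2) ^ 4 / q.2.2 ^ 3 =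
      Real.pi := by
  have hl2 : (0:ℝ) < lam ^ 2 := by positivity
  set S : Set (ℝ × ℝ × ℝ) := {q | 0 < q.2.2} with hS
  have hSmeas : MeasurableSet S :=
    measurableSet_lt measurable_const (measurable_snd.comp measurable_snd)
  set f0 : ℝ × ℝ × ℝ → ℝ := fun q =>
    12 * lam ^ 4 * q.2.2 ^ 4 / (q.1 ^ 2 + q.2.1 ^ 2 + q.2.2 ^ 2 + lam ^ 2) ^ 4 / q.2.2 ^ 3
    with hf0
  have hf0m : Measurable f0 := by
    apply Measurable.div
    apply Measurable.div
    · fun_prop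
    · fun_prop
    · fun_prop
  -- Step 1 : translation to center the integrand
  have step1 : (∫ q in S, 12 * lam ^ 4 * q.2.2 ^ 4 /
        ((q.1 - x0) ^ 2 + (q.2.1 - y0) ^ 2 + q.2.2 ^ 2 + lam ^ 2) ^ 4 / q.2.2 ^ 3)
      = ∫ q in S, f0 q := by
    rw [← integral_indicator hSmeas, ← integral_indicator hSmeas]
    have hpt : ∀ q : ℝ × ℝ × ℝ,
        S.indicator (fun q : ℝ × ℝ × ℝ => 12 * lam ^ 4 * q.2.2 ^ 4 /
          ((q.1 - x0) ^ 2 + (q.2.1 - y0) ^ 2 + q.2.2 ^ 2 + lam ^ 2) ^ 4 / q.2.2 ^ 3) q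
        = S.indicator f0 (q - (x0, y0, 0)) := by
      intro q
      have hsub1 : (q - (x0, y0, 0)).1 = q.1 - x0 := rfl
      have hsub2 : (q - (x0, y0, 0)).2.1 = q.2.1 - y0 := rfl
      have hsub3 : (q - (x0, y0, 0)).2.2 = q.2.2 := by
        show q.2.2 - 0 = q.2.2; ring
      have hmem : (q - (x0, y0, 0)) ∈ S ↔ q ∈ S := by
        simp only [hS, mem_setOf_eq, hsub3]
      by_cases hq : q ∈ S
      · rw [indicator_of_mem hq, indicator_of_mem (hmem.mpr hq), hf0]
        simp only [hsub1, hsub2, hsub3]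
      · rw [indicator_of_notMem hq, indicator_of_notMem (fun h => hq (hmem.mp h))]
    simp_rw [hpt]
    haveI : (volume : Measure (ℝ × ℝ × ℝ)).IsAddRightInvariant := by
      rw [Measure.volume_eq_prod]; infer_instance
    exact integral_sub_right_eq_self (S.indicator f0) (x0, y0, 0)
  rw [step1]
  rw [← integral_indicator hSmeas]
  set G : ℝ × ℝ × ℝ → ℝ := S.indicator f0 with hG
  have hGm : Measurable G := hf0m.indicator hSmeas
  have hGnn : ∀ q, 0 ≤ G q := by
    intro q
    rw [hG]
    by_cases hq : q ∈ S
    · rw [indicator_of_mem hq, hf0]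
      have hρ : 0 < q.2.2 := hq
      positivity
    · rw [indicator_of_notMem hq]
  -- innermost integral facts
  have hA : ∀ x y : ℝ, (0:ℝ) < x ^ 2 + y ^ 2 + lam ^ 2 := fun x y => by positivity
  have hGind : ∀ x y ρ : ℝ, G (x, y, ρ) = (Ioi (0:ℝ)).indicator (fun t => f0 (x, y, t)) ρ := by
    intro x y ρ
    by_cases hρ : 0 < ρ
    · rw [hG, indicator_of_mem (show (x,y,ρ) ∈ S from hρ),
        indicator_of_mem (show ρ ∈ Ioi (0:ℝ) from hρ)]
    · rw [hG, indicator_of_notMem (show (x,y,ρ) ∉ S from hρ),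
        indicator_of_notMem (show ρ ∉ Ioi (0:ℝ) from hρ)]
  have hEqOn : ∀ x y : ℝ, EqOn (fun t : ℝ => 12 * lam ^ 4 *
        (t / (t ^ 2 + (x ^ 2 + y ^ 2 + lam ^ 2)) ^ (2 + 2))) (fun t => f0 (x, y, t)) (Ioi 0) := by
    intro x y t ht
    have ht' : (0:ℝ) < t := ht
    have hd : (0:ℝ) < t ^ 2 + (x ^ 2 + y ^ 2 + lam ^ 2) := by positivity
    have hd' : (x ^ 2 + y ^ 2 + t ^ 2 + lam ^ 2) = t ^ 2 + (x ^ 2 + y ^ 2 + lam ^ 2) := by ring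
    simp only [hf0]
    rw [hd']
    field_simp
  have hIntρ : ∀ x y : ℝ, IntegrableOn (fun t => f0 (x, y, t)) (Ioi 0) volume := by
    intro x y
    have h1 : IntegrableOn (fun t : ℝ => 12 * lam ^ 4 *
        (t / (t ^ 2 + (x ^ 2 + y ^ 2 + lam ^ 2)) ^ (2 + 2))) (Ioi 0) volume :=
      (integral_aux _ (hA x y) 2).1.const_mul (12 * lam ^ 4)
    exact h1.congr_fun (hEqOn x y) measurableSet_Ioi
  have hIntG1 : ∀ x y : ℝ, Integrable (fun ρ => G (x, y, ρ)) volume := by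
    intro x y
    have := (integrable_indicator_iff (measurableSet_Ioi (a := (0:ℝ)))).mpr (hIntρ x y)
    exact this.congr (Eventually.of_forall fun ρ => (hGind x y ρ).symm)
  have hValρ : ∀ x y : ℝ, ∫ ρ, G (x, y, ρ)
      = 2 * lam ^ 4 / (x ^ 2 + y ^ 2 + lam ^ 2) ^ 3 := by
    intro x y
    have h1 : ∫ ρ, G (x, y, ρ) = ∫ t in Ioi (0:ℝ), f0 (x, y, t) := by
      simp_rw [hGind x y]
      exact integral_indicator measurableSet_Ioi
    rw [h1, ← setIntegral_congr_fun measurableSet_Ioi (hEqOn x y),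
      MeasureTheory.integral_const_mul, (integral_aux _ (hA x y) 2).2]
    have := hA x y
    have h3 : ((x ^ 2 + y ^ 2 + lam ^ 2) ^ (2+1)) = (x ^ 2 + y ^ 2 + lam ^ 2) ^ 3 := by norm_num
    rw [h3]
    field_simp
    ring
  set g2 : ℝ × ℝ → ℝ := fun p => 2 * lam ^ 4 / (p.1 ^ 2 + p.2 ^ 2 + lam ^ 2) ^ 3 with hg2
  have hg2m : Measurable g2 := by fun_prop
  have hg2nn : ∀ p, 0 ≤ g2 p := fun p => by rw [hg2]; positivity
  have hg2y : ∀ x : ℝ, Integrable (fun y => g2 (x, y)) volume := by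
    intro x
    have hx : (0:ℝ) < x ^ 2 + lam ^ 2 := by positivity
    apply ((integrable_inv_pow hx 2).const_mul (2 * lam ^ 4)).congr
    filter_upwards with y
    rw [hg2]
    have hne : (y ^ 2 + (x ^ 2 + lam ^ 2)) ≠ 0 := by positivity
    have hne2 : (x ^ 2 + y ^ 2 + lam ^ 2) ≠ 0 := by positivity
    field_simp
    ring
  have hIntG2 : ∀ x : ℝ, Integrable (fun p : ℝ × ℝ => G (x, p)) volume := by
    intro x
    rw [Measure.volume_eq_prod]
    refine (integrable_prod_iff ?_).mpr ⟨?_, ?_⟩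
    · exact (hGm.comp measurable_prodMk_left).aestronglyMeasurable
    · exact Eventually.of_forall fun y => hIntG1 x y
    · have heq : (fun y => ∫ ρ, ‖G (x, y, ρ)‖) = fun y => g2 (x, y) := by
        funext y
        have h1 : (fun ρ => ‖G (x, y, ρ)‖) = fun ρ => G (x, y, ρ) := by
          funext ρ; rw [Real.norm_of_nonneg (hGnn _)]
        rw [h1, hValρ x y, hg2]
      rw [heq]
      exact hg2y x
  have hValG2 : ∀ x : ℝ, ∫ p : ℝ × ℝ, G (x, p) = ∫ y, g2 (x, y) := by
    intro x
    rw [Measure.volume_eq_prod, integral_prod _ (hIntG2 x)]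
    refine integral_congr_ae (Eventually.of_forall fun y => ?_)
    exact (hValρ x y).trans (by rw [hg2])
  -- bound for the outer integrability
  have hC : Integrable (fun y : ℝ => ((y ^ 2 + lam ^ 2) ^ (0 + 1))⁻¹) :=
    integrable_inv_pow hl2 0
  set C : ℝ := ∫ y : ℝ, ((y ^ 2 + lam ^ 2) ^ (0 + 1))⁻¹ with hCdef
  have hHbound : ∀ x : ℝ, ∫ y, g2 (x, y)
      ≤ (2 * lam ^ 4 * ((x ^ 2 + lam ^ 2) ^ (1 + 1))⁻¹) * C := by
    intro x
    have hx : (0:ℝ) < x ^ 2 + lam ^ 2 := by positivity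
    have hptb : ∀ y : ℝ, g2 (x, y)
        ≤ (2 * lam ^ 4 * ((x ^ 2 + lam ^ 2) ^ (1 + 1))⁻¹) * ((y ^ 2 + lam ^ 2) ^ (0 + 1))⁻¹ := by
      intro y
      have hu : (0:ℝ) ≤ x ^ 2 := sq_nonneg x
      have hv : (0:ℝ) ≤ y ^ 2 := sq_nonneg y
      have hw : (0:ℝ) < lam ^ 2 := hl2
      have key : (x ^ 2 + lam ^ 2) ^ 2 * (y ^ 2 + lam ^ 2) ≤ (x ^ 2 + y ^ 2 + lam ^ 2) ^ 3 := by
        nlinarith [mul_nonneg hu hv, mul_nonneg (mul_nonneg hu hu) hv,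
          mul_nonneg (mul_nonneg hv hv) hu, mul_nonneg (mul_nonneg hv hv) hw.le,
          mul_nonneg (mul_nonneg hu hv) hw.le, mul_nonneg (mul_nonneg hw.le hw.le) hv,
          sq_nonneg (x ^ 2 + lam ^ 2)]
      have h2 : (0:ℝ) < (x ^ 2 + lam ^ 2) ^ 2 * (y ^ 2 + lam ^ 2) := by positivity
      calc g2 (x, y) = 2 * lam ^ 4 / (x ^ 2 + y ^ 2 + lam ^ 2) ^ 3 := by rw [hg2]
        _ ≤ 2 * lam ^ 4 / ((x ^ 2 + lam ^ 2) ^ 2 * (y ^ 2 + lam ^ 2)) := by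
            gcongr
        _ = (2 * lam ^ 4 * ((x ^ 2 + lam ^ 2) ^ (1 + 1))⁻¹) * ((y ^ 2 + lam ^ 2) ^ (0 + 1))⁻¹ := by
            norm_num
            rw [div_eq_mul_inv, mul_inv]
            ring
    calc ∫ y, g2 (x, y)
        ≤ ∫ y, (2 * lam ^ 4 * ((x ^ 2 + lam ^ 2) ^ (1 + 1))⁻¹) * ((y ^ 2 + lam ^ 2) ^ (0 + 1))⁻¹ :=
          integral_mono (hg2y x) (hC.const_mul _) hptb
      _ = (2 * lam ^ 4 * ((x ^ 2 + lam ^ 2) ^ (1 + 1))⁻¹) * C := by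
          rw [MeasureTheory.integral_const_mul]
  have hHm : AEStronglyMeasurable (fun x => ∫ y, g2 (x, y)) volume := by
    have := hg2m.aestronglyMeasurable (μ := (volume : Measure ℝ).prod volume)
    exact this.integral_prod_right'
  have hHnn : ∀ x : ℝ, 0 ≤ ∫ y, g2 (x, y) := fun x => integral_nonneg fun y => hg2nn _
  have hHint : Integrable (fun x => ∫ y, g2 (x, y)) volume := by
    apply (((integrable_inv_pow hl2 1).const_mul (2 * lam ^ 4)).mul_const C).mono' hHm
    filter_upwards with x
    rw [Real.norm_of_nonneg (hHnn x)]
    exact hHbound x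
  have hGInt : Integrable G ((volume : Measure ℝ).prod volume) := by
    refine (integrable_prod_iff hGm.aestronglyMeasurable).mpr
      ⟨Eventually.of_forall hIntG2, ?_⟩
    have heq : (fun x => ∫ p : ℝ × ℝ, ‖G (x, p)‖) = fun x => ∫ y, g2 (x, y) := by
      funext x
      have h1 : (fun p : ℝ × ℝ => ‖G (x, p)‖) = fun p => G (x, p) := by
        funext p; rw [Real.norm_of_nonneg (hGnn _)]
      rw [h1, hValG2 x]
    rw [heq]
    exact hHint
  have hg2Int : Integrable g2 ((volume : Measure ℝ).prod volume) := by
    refine (integrable_prod_iff hg2m.aestronglyMeasurable).mpr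
      ⟨Eventually.of_forall hg2y, ?_⟩
    have heq : (fun x => ∫ y, ‖g2 (x, y)‖) = fun x => ∫ y, g2 (x, y) := by
      funext x; congr 1; funext y; rw [Real.norm_of_nonneg (hg2nn _)]
    rw [heq]; exact hHint
  calc ∫ q, G q = ∫ x, ∫ p : ℝ × ℝ, G (x, p) := by
        rw [Measure.volume_eq_prod]; exact integral_prod _ hGInt
    _ = ∫ x, ∫ y, g2 (x, y) := integral_congr_ae (Eventually.of_forall fun x => hValG2 x)
    _ = ∫ p : ℝ × ℝ, g2 p := by
        rw [Measure.volume_eq_prod]; exact (integral_prod _ hg2Int).symm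
    _ = π := twoD lam hlam
end
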